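/- The interpretation of (δ₁×ω)∧(δ₂×κ) equals the interpretation of (δ₁∧δ₂)×κ: ⟦(δ₁×ω)∧(δ₂×κ)⟧ = ⟦(δ₁∧δ₂)×κ⟧. -/
import Mathlib


/-- λμ-terms: variables, abstraction, application, and μ-abstraction
    `mu a b M` represents μα.[β]M (a = α, b = β). -/
inductive Trm : Type
  | var : ℕ → Trm
  | lam : ℕ → Trm → Trm
  | app : Trm → Trm → Trm
  | mu  : ℕ → ℕ → Trm → Trm
deriving DecidableEq

/-- Term substitution M[N/x] (Barendregt convention: no capture). -/
def subst : Trm → ℕ → Trm → Trm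
  | .var y, x, N => if y = x then N else .var y
  | .lam y M, x, N => .lam y (subst M x N)
  | .app M P, x, N => .app (subst M x N) (subst P x N)
  | .mu a b M, x, N => .mu a b (subst M x N)

/-- Structural substitution M{α ⇐ N}: every named subterm [α]P becomes [α]PN. -/
def ssub : Trm → ℕ → Trm → Trm
  | .var y, _, _ => .var y
  | .lam y M, a, N => .lam y (ssub M a N)
  | .app M P, a, N => .app (ssub M a N) (ssub P a N)
  | .mu b c M, a, N =>
      .mu b c (if c = a then .app (ssub M a N) N else ssub M a N)

/-- Iterated structural substitution M{α ⇐ N₁}…{α ⇐ Nₘ}. -/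
def ssubs (a : ℕ) (M : Trm) (Ns : List Trm) : Trm :=
  Ns.foldl (fun T N => ssub T a N) M

/-- Application of a term to a stack of terms: M L₁ … Lₖ. -/
def appList (M : Trm) (L : List Trm) : Trm := L.foldl .app M

/-- One-step reduction: logical (β) and structural (μ) rules, compatible closure. -/
inductive Red : Trm → Trm → Prop
  | beta (x : ℕ) (M N : Trm) : Red (.app (.lam x M) N) (subst M x N)
  | mu (a b : ℕ) (M N : Trm) : Red (.app (.mu a b M) N) (ssub (.mu a b M) a N)
  | appL {M M' : Trm} (N : Trm) : Red M M' → Red (.app M N) (.app M' N)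
  | appR (M : Trm) {N N' : Trm} : Red N N' → Red (.app M N) (.app M N')
  | lam (x : ℕ) {M M' : Trm} : Red M M' → Red (.lam x M) (.lam x M')
  | muC (a b : ℕ) {M M' : Trm} : Red M M' → Red (.mu a b M) (.mu a b M')

/-- Strong normalisation: no infinite reduction sequence from M. -/
def SN (M : Trm) : Prop := Acc (fun p q => Red q p) M

/-- Stacks of strongly normalising terms. -/
def SNs (L : List Trm) : Prop := ∀ P ∈ L, SN P

mutual
/-- Term types δ ::= ν | ω→ν | κ→ν | δ∧δ. -/
inductive TyD : Type
  | nu : TyD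
  | arrOmega : TyD
  | arr : TyC → TyD
  | inter : TyD → TyD → TyD
/-- Continuation-stack types κ ::= δ×ω | δ×κ | κ∧κ. -/
inductive TyC : Type
  | prodOmega : TyD → TyC
  | prod : TyD → TyC → TyC
  | inter : TyC → TyC → TyC
end

mutual
/-- The subtyping preorder on term types. -/
inductive LeD : TyD → TyD → Prop
  | refl (d) : LeD d d
  | trans {d1 d2 d3} : LeD d1 d2 → LeD d2 d3 → LeD d1 d3
  | interL (d1 d2) : LeD (.inter d1 d2) d1
  | interR (d1 d2) : LeD (.inter d1 d2) d2
  | glb {d d1 d2} : LeD d d1 → LeD d d2 → LeD d (.inter d1 d2)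
  | nuOmega : LeD .nu .arrOmega
  | omegaNu : LeD .arrOmega .nu
  | arr {k1 k2} : LeC k2 k1 → LeD (.arr k1) (.arr k2)
/-- The subtyping preorder on continuation-stack types. -/
inductive LeC : TyC → TyC → Prop
  | refl (k) : LeC k k
  | trans {k1 k2 k3} : LeC k1 k2 → LeC k2 k3 → LeC k1 k3
  | interL (k1 k2) : LeC (.inter k1 k2) k1
  | interR (k1 k2) : LeC (.inter k1 k2) k2
  | glb {k k1 k2} : LeC k k1 → LeC k k2 → LeC k (.inter k1 k2)
  | drop (d1 d2) : LeC (.prod d1 (.prodOmega d2)) (.prodOmega d1)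
  | distOmega (d1 d2 k) :
      LeC (.inter (.prodOmega d1) (.prod d2 k)) (.prod (.inter d1 d2) k)
  | dist (d1 d2 k1 k2) :
      LeC (.inter (.prod d1 k1) (.prod d2 k2))
          (.prod (.inter d1 d2) (.inter k1 k2))
  | monoOmega {d1 d2} : LeD d1 d2 → LeC (.prodOmega d1) (.prodOmega d2)
  | mono {d1 d2 k1 k2} : LeD d1 d2 → LeC k1 k2 → LeC (.prod d1 k1) (.prod d2 k2)
end

mutual
/-- Interpretation of term types as sets of terms. -/
def semD : TyD → Set Trm
  | .nu => {M | SN M}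
  | .arrOmega => {M | SN M}
  | .arr k => {M | ∀ L ∈ semC k, SN (appList M L)}
  | .inter d1 d2 => semD d1 ∩ semD d2
/-- Interpretation of continuation-stack types as sets of stacks. -/
def semC : TyC → Set (List Trm)
  | .prodOmega d => {l | ∃ N L, l = N :: L ∧ N ∈ semD d ∧ SNs L}
  | .prod d k => {l | ∃ N L, l = N :: L ∧ N ∈ semD d ∧ L ∈ semC k}
  | .inter k1 k2 => semC k1 ∩ semC k2
end

/-- Minimal length ‖κ‖ of stacks in ⟦κ⟧. -/
def lenC : TyC → ℕ
  | .prodOmega _ => 1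
  | .prod _ k => 1 + lenC k
  | .inter k1 k2 => max (lenC k1) (lenC k2)

abbrev Ctx := ℕ → Option TyD
abbrev NCtx := ℕ → Option TyC

/-- The intersection type assignment system for λμ.
    In the (abs)/(app) rules κ may be a continuation type or ω, hence two forms. -/
inductive Typ : Ctx → Trm → TyD → NCtx → Prop
  | ax {Γ : Ctx} {x δ} (Δ : NCtx) : Γ x = some δ → Typ Γ (.var x) δ Δ
  | abs {Γ x δ κ M Δ} : Typ (Function.update Γ x (some δ)) M (.arr κ) Δ →
      Typ Γ (.lam x M) (.arr (.prod δ κ)) Δ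
  | absOmega {Γ x δ M Δ} : Typ (Function.update Γ x (some δ)) M .arrOmega Δ →
      Typ Γ (.lam x M) (.arr (.prodOmega δ)) Δ
  | app {Γ M N δ κ Δ} : Typ Γ M (.arr (.prod δ κ)) Δ → Typ Γ N δ Δ →
      Typ Γ (.app M N) (.arr κ) Δ
  | appOmega {Γ M N δ Δ} : Typ Γ M (.arr (.prodOmega δ)) Δ → Typ Γ N δ Δ →
      Typ Γ (.app M N) .arrOmega Δ
  | muNe {Γ M a b κ κ' Δ} : a ≠ b →
      Typ Γ M (.arr κ') (Function.update (Function.update Δ b (some κ')) a (some κ)) →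
      Typ Γ (.mu a b M) (.arr κ) (Function.update Δ b (some κ'))
  | muEq {Γ M a κ Δ} : Typ Γ M (.arr κ) (Function.update Δ a (some κ)) →
      Typ Γ (.mu a a M) (.arr κ) Δ
  | sub {Γ M δ δ' Δ} : Typ Γ M δ Δ → LeD δ δ' → Typ Γ M δ' Δ
  | inter {Γ M δ1 δ2 Δ} : Typ Γ M δ1 Δ → Typ Γ M δ2 Δ → Typ Γ M (.inter δ1 δ2) Δ

/-- Free variables. -/
def fv : Trm → Set ℕ
  | .var x => {x}
  | .lam x M => fv M \ {x}
  | .app M N => fv M ∪ fv N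
  | .mu _ _ M => fv M

/-- Free names. -/
def fn : Trm → Set ℕ
  | .var _ => ∅
  | .lam _ M => fn M
  | .app M N => fn M ∪ fn N
  | .mu a b M => (fn M ∪ {b}) \ {a}

/-- Bound variables. -/
def bv : Trm → Set ℕ
  | .var _ => ∅
  | .lam x M => {x} ∪ bv M
  | .app M N => bv M ∪ bv N
  | .mu _ _ M => bv M

/-- Bound names. -/
def bn : Trm → Set ℕ
  | .var _ => ∅
  | .lam _ M => bn M
  | .app M N => bn M ∪ bn N
  | .mu a _ M => {a} ∪ bn M

/-- Γ' ≤ Γ on variable contexts. -/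
def CtxLe (Γ' Γ : Ctx) : Prop :=
  ∀ x δ, Γ x = some δ → ∃ δ', Γ' x = some δ' ∧ LeD δ' δ

/-- Δ' ≤ Δ on name contexts. -/
def NCtxLe (Δ' Δ : NCtx) : Prop :=
  ∀ a κ, Δ a = some κ → ∃ κ', Δ' a = some κ' ∧ LeC κ' κ

/-- Application of a parallel substitution (ξv on variables, ξn on names;
    default ξv x = var x / ξn a = [] encodes "not in the domain"). -/
def psub (ξv : ℕ → Trm) (ξn : ℕ → List Trm) : Trm → Trm
  | .var x => ξv x
  | .lam x M => .lam x (psub ξv ξn M)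
  | .app M N => .app (psub ξv ξn M) (psub ξv ξn N)
  | .mu a b M => .mu a b (appList (psub ξv ξn M) (ξn b))

/-- Normal forms: N ::= x N₁…Nₖ | λx.N | μα.[β]N. -/
inductive Nf : Trm → Prop
  | varApp (x : ℕ) (Ns : List Trm) : (∀ N ∈ Ns, Nf N) → Nf (appList (.var x) Ns)
  | lam (x : ℕ) {M} : Nf M → Nf (.lam x M)
  | mu (a b : ℕ) {M} : Nf M → Nf (.mu a b M)

/-- Simple types (logical formulas) A ::= φ | A → B. -/
inductive SType : Type
  | base : ℕ → SType
  | arrow : SType → SType → SType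

abbrev SCtx := ℕ → Option SType

/-- Parigot's simply-typed λμ-calculus (propositional fragment). -/
inductive STyp : SCtx → Trm → SType → SCtx → Prop
  | ax {Γ : SCtx} {x A} (Δ : SCtx) : Γ x = some A → STyp Γ (.var x) A Δ
  | arrI {Γ x A B M Δ} : STyp (Function.update Γ x (some A)) M B Δ →
      STyp Γ (.lam x M) (.arrow A B) Δ
  | arrE {Γ M N A B Δ} : STyp Γ M (.arrow A B) Δ → STyp Γ N A Δ →
      STyp Γ (.app M N) B Δ
  | mu1 {Γ M a A Δ} : STyp Γ M A (Function.update Δ a (some A)) →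
      STyp Γ (.mu a a M) A Δ
  | mu2 {Γ M a b A B Δ} : a ≠ b →
      STyp Γ M B (Function.update (Function.update Δ b (some B)) a (some A)) →
      STyp Γ (.mu a b M) A (Function.update Δ b (some B))

/-- Translation of formulas to continuation-stack types. -/
def transC : SType → TyC
  | .base _ => .prodOmega .nu
  | .arrow A B => .prod (.arr (transC A)) (transC B)

/-- Translation of formulas to term types. -/
def transD (A : SType) : TyD := .arr (transC A)

/-- Variable-headed applications. -/
inductive IsVA : Trm → Prop
  | var (x : ℕ) : IsVA (.var x)
  | app {M : Trm} (N : Trm) : IsVA M → IsVA (.app M N)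

theorem sn_var (x : ℕ) : SN (.var x) :=
  Acc.intro _ (fun _ r => by cases r)

theorem isVA_red : ∀ {M M' : Trm}, IsVA M → Red M M' → IsVA M' := by
  intro M M' h r
  induction h generalizing M' with
  | var x => cases r
  | app N hM ih =>
    cases r with
    | beta x P Q => cases hM
    | mu a b P Q => cases hM
    | appL _ r' => exact .app _ (ih r')
    | appR _ r' => exact .app _ hM

theorem sn_app_va : ∀ M : Trm, SN M → IsVA M → ∀ N : Trm, SN N → SN (.app M N) := by
  intro M hM
  induction hM with
  | intro M hM ihM =>
    intro hva N hN
    induction hN with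
    | intro N hN ihN =>
      constructor
      intro T r
      cases r with
      | beta x P Q => cases hva
      | mu a b P Q => cases hva
      | appL _ r' => exact ihM _ r' (isVA_red hva r') _ (Acc.intro _ hN)
      | appR _ r' => exact ihN _ r'

theorem sn_appList_va : ∀ (L : List Trm) (M : Trm), IsVA M → SN M → SNs L →
    SN (appList M L) := by
  intro L
  induction L with
  | nil => intro M _ hM _; exact hM
  | cons N L ih =>
    intro M hva hM hL
    show SN (appList (.app M N) L)
    exact ih _ (.app N hva) (sn_app_va M hM hva N (hL N (by simp)))
      (fun P hP => hL P (by simp [hP]))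

theorem sn_of_app_left : ∀ {M N : Trm}, SN (.app M N) → SN M := by
  have key : ∀ T : Trm, Acc (fun p q => Red q p) T → ∀ M N : Trm, T = .app M N → SN M := by
    intro T hT
    induction hT with
    | intro T h ih =>
      rintro M N rfl
      constructor
      intro M' r
      exact ih _ (Red.appL N r) M' N rfl
  intro M N h
  exact key _ h M N rfl

theorem sn_appList_left : ∀ (L : List Trm) (M : Trm), SN (appList M L) → SN M := by
  intro L
  induction L with
  | nil => intro M h; exact h
  | cons N L ih =>
    intro M h
    exact sn_of_app_left (ih (.app M N) h)

mutual
theorem semD_sn : ∀ d : TyD, ∀ M ∈ semD d, SN M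
  | .nu, M, h => h
  | .arrOmega, M, h => h
  | .arr k, M, h =>
      sn_appList_left _ _ (h _ (semC_replicate k (lenC k) le_rfl))
  | .inter d1 d2, M, h => semD_sn d1 M h.1

theorem semD_var : ∀ d : TyD, ∀ x : ℕ, Trm.var x ∈ semD d
  | .nu, x => sn_var x
  | .arrOmega, x => sn_var x
  | .arr k, x => fun L hL => sn_appList_va L _ (.var x) (sn_var x) (semC_sns k L hL)
  | .inter d1 d2, x => ⟨semD_var d1 x, semD_var d2 x⟩

theorem semC_sns : ∀ k : TyC, ∀ L ∈ semC k, SNs L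
  | .prodOmega d, L, ⟨N, L', hEq, hN, hL'⟩ => by
      subst hEq
      intro P hP
      cases hP with
      | head => exact semD_sn d N hN
      | tail _ hP => exact hL' P hP
  | .prod d k, L, ⟨N, L', hEq, hN, hL'⟩ => by
      subst hEq
      intro P hP
      cases hP with
      | head => exact semD_sn d N hN
      | tail _ hP => exact semC_sns k L' hL' P hP
  | .inter k1 k2, L, h => semC_sns k1 L h.1

theorem semC_replicate : ∀ k : TyC, ∀ n : ℕ, lenC k ≤ n →
    List.replicate n (Trm.var 0) ∈ semC k
  | .prodOmega d, n, hn => by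
      have hn1 : 1 ≤ n := by simpa [lenC] using hn
      obtain ⟨m, rfl⟩ : ∃ m, n = m + 1 := ⟨n - 1, by omega⟩
      refine ⟨Trm.var 0, List.replicate m (Trm.var 0), by simp [List.replicate_succ],
        semD_var d 0, ?_⟩
      intro P hP
      rw [List.eq_of_mem_replicate hP]
      exact sn_var 0
  | .prod d k, n, hn => by
      have hn1 : 1 + lenC k ≤ n := by simpa [lenC] using hn
      obtain ⟨m, rfl⟩ : ∃ m, n = m + 1 := ⟨n - 1, by omega⟩
      exact ⟨Trm.var 0, List.replicate m (Trm.var 0), by simp [List.replicate_succ],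
        semD_var d 0, semC_replicate k m (by omega)⟩
  | .inter k1 k2, n, hn =>
      ⟨semC_replicate k1 n (le_trans (le_max_left _ _) hn),
       semC_replicate k2 n (le_trans (le_max_right _ _) hn)⟩
end

/-- ⟦(δ₁×ω)∧(δ₂×κ)⟧ = ⟦(δ₁∧δ₂)×κ⟧. -/
theorem sem_dist_omega (δ₁ δ₂ : TyD) (κ : TyC) :
    semC (.inter (.prodOmega δ₁) (.prod δ₂ κ)) = semC (.prod (.inter δ₁ δ₂) κ) := by
  ext l
  constructor
  · rintro ⟨⟨N, L, rfl, hN1, hL1⟩, ⟨N', L', hEq, hN2, hL2⟩⟩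
    obtain ⟨rfl, rfl⟩ : N = N' ∧ L = L' := by
      constructor <;> injection hEq
    exact ⟨N, L, rfl, ⟨hN1, hN2⟩, hL2⟩
  · rintro ⟨N, L, rfl, ⟨hN1, hN2⟩, hL⟩
    exact ⟨⟨N, L, rfl, hN1, semC_sns κ L hL⟩, ⟨N, L, rfl, hN2, hL⟩⟩
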